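/- arXiv:2502.01148 — 2 statements merged into one kernel-verified Lean document; each statement's English description precedes it below -/
import Mathlib

section
/- Let V be a real Hilbert space, A: V → V a bounded linear operator that is strongly monotone with constant Cₛ > 0 (i.e., ⟨A(u−v), u−v⟩ ≥ Cₛ‖u−v‖² for all u, v), and suppose ψ⁰-type terms satisfy a relaxed monotonicity with constant m < Cₛ. If E₁, E₂ ∈ V both satisfy ⟨A Eᵢ, v⟩ + Ψ⁰(Eᵢ; v) ≥ ⟨f, v⟩ for all v ∈ V, where Ψ⁰(u₁; u₂−u₁) + Ψ⁰(u₂; u₁−u₂) ≤ m‖u₁−u₂‖² for all u₁, u₂ ∈ V, then E₁ = E₂. -/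
/- Testing the two inequalities with `v = E₂ - E₁` and `v = E₁ - E₂` and adding them cancels `f`,
so strong monotonicity of `A` is bounded by the relaxed monotonicity of `Ψ₀`:
`Cs ‖E₁ - E₂‖² ≤ m ‖E₁ - E₂‖²`, which forces `E₁ = E₂` since `m < Cs`. -/

open RealInnerProductSpace

theorem inner_map_sub_le_of_hemivariational
    {V : Type*} [NormedAddCommGroup V] [InnerProductSpace ℝ V]
    (A : V →ₗ[ℝ] V) (Ψ₀ : V → V → ℝ) (f : V) {E₁ E₂ : V}
    (h₁ : ∀ v : V, ⟪A E₁, v⟫ + Ψ₀ E₁ v ≥ ⟪f, v⟫)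
    (h₂ : ∀ v : V, ⟪A E₂, v⟫ + Ψ₀ E₂ v ≥ ⟪f, v⟫) :
    ⟪A (E₁ - E₂), E₁ - E₂⟫ ≤ Ψ₀ E₁ (E₂ - E₁) + Ψ₀ E₂ (E₁ - E₂) := by
  have h₁₂ := h₁ (E₂ - E₁)
  have h₂₁ := h₂ (E₁ - E₂)
  simp only [map_sub, inner_sub_left, inner_sub_right] at h₁₂ h₂₁ ⊢
  linarith

theorem eq_of_mul_norm_sub_sq_le {E : Type*} [NormedAddCommGroup E] {x y : E} {c m : ℝ}
    (hmc : m < c) (h : c * ‖x - y‖ ^ 2 ≤ m * ‖x - y‖ ^ 2) : x = y := by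
  have hsq : ‖x - y‖ ^ 2 ≤ 0 := by nlinarith
  have hzero : ‖x - y‖ = 0 := pow_eq_zero_iff two_ne_zero |>.mp (hsq.antisymm (sq_nonneg _))
  exact sub_eq_zero.mp (norm_eq_zero.mp hzero)

theorem uniqueness_of_hvi_solution_general
    {V : Type*} [NormedAddCommGroup V] [InnerProductSpace ℝ V]
    (A : V →L[ℝ] V) (Cs : ℝ)
    (hA : ∀ u v : V, ⟪A (u - v), u - v⟫ ≥ Cs * ‖u - v‖ ^ 2)
    (Ψ₀ : V → V → ℝ) (m : ℝ) (hmCs : m < Cs)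
    (hΨ : ∀ u₁ u₂ : V, Ψ₀ u₁ (u₂ - u₁) + Ψ₀ u₂ (u₁ - u₂) ≤ m * ‖u₁ - u₂‖ ^ 2)
    (f : V) (E₁ E₂ : V)
    (h₁ : ∀ v : V, ⟪A E₁, v⟫ + Ψ₀ E₁ v ≥ ⟪f, v⟫)
    (h₂ : ∀ v : V, ⟪A E₂, v⟫ + Ψ₀ E₂ v ≥ ⟪f, v⟫) :
    E₁ = E₂ :=
  eq_of_mul_norm_sub_sq_le hmCs <| (hA E₁ E₂).trans <|
    (inner_map_sub_le_of_hemivariational (A : V →ₗ[ℝ] V) Ψ₀ f h₁ h₂).trans (hΨ E₁ E₂)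

theorem uniqueness_of_hvi_solution
    {V : Type*} [NormedAddCommGroup V] [InnerProductSpace ℝ V] [CompleteSpace V]
    (A : V →L[ℝ] V) (Cs : ℝ) (hCs : 0 < Cs)
    (hA : ∀ u v : V, ⟪A (u - v), u - v⟫ ≥ Cs * ‖u - v‖ ^ 2)
    (Ψ₀ : V → V → ℝ) (m : ℝ) (hm : 0 ≤ m) (hmCs : m < Cs)
    (hΨ : ∀ u₁ u₂ : V, Ψ₀ u₁ (u₂ - u₁) + Ψ₀ u₂ (u₁ - u₂) ≤ m * ‖u₁ - u₂‖ ^ 2)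
    (f : V) (E₁ E₂ : V)
    (h₁ : ∀ v : V, ⟪A E₁, v⟫ + Ψ₀ E₁ v ≥ ⟪f, v⟫)
    (h₂ : ∀ v : V, ⟪A E₂, v⟫ + Ψ₀ E₂ v ≥ ⟪f, v⟫) :
    E₁ = E₂ :=
  uniqueness_of_hvi_solution_general A Cs hA Ψ₀ m hmCs hΨ f E₁ E₂ h₁ h₂
end

section
/- Let V be a real Hilbert space and g: V → ℝ locally Lipschitz. Then g is strongly convex with constant α > 0 (i.e., v ↦ g(v) − α‖v‖² is convex) if and only if its Clarke subdifferential ∂g is strongly monotone with constant 2α, i.e., ⟨ξ − η, u − v⟩ ≥ 2α‖u − v‖² for all u, v ∈ V, ξ ∈ ∂g(u), η ∈ ∂g(v). -/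
open Filter RealInnerProductSpace

/-- The Clarke generalized directional derivative. -/
noncomputable def clarkeDeriv {V : Type*} [NormedAddCommGroup V] [NormedSpace ℝ V]
    (ψ : V → ℝ) (u v : V) : ℝ :=
  limsup (fun p : V × ℝ => (ψ (p.1 + p.2 • v) - ψ p.1) / p.2)
    ((nhds u) ×ˢ (nhdsWithin (0 : ℝ) (Set.Ioi 0)))

/-- The Clarke subdifferential in a real inner product space. -/
def clarkeSubdiff {V : Type*} [NormedAddCommGroup V] [InnerProductSpace ℝ V]
    (ψ : V → ℝ) (u : V) : Set V :=
  {ξ : V | ∀ v : V, ⟪ξ, v⟫ ≤ clarkeDeriv ψ u v}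

namespace ClarkeProof

open Set

variable {V : Type*} [NormedAddCommGroup V] [InnerProductSpace ℝ V]

/-- Difference quotient. -/
noncomputable def DQ (f : V → ℝ) (v : V) (p : V × ℝ) : ℝ :=
  (f (p.1 + p.2 • v) - f p.1) / p.2

/-- The product filter used in the Clarke derivative. -/
def PF (u : V) : Filter (V × ℝ) := (nhds u) ×ˢ (nhdsWithin (0 : ℝ) (Set.Ioi 0))

instance (u : V) : (PF u).NeBot := by
  unfold PF; infer_instance

lemma clarkeDeriv_def (f : V → ℝ) (u v : V) :
    clarkeDeriv f u v = limsup (DQ f v) (PF u) := rfl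

lemma locallyLipschitz_add {f g : V → ℝ} (hf : LocallyLipschitz f) (hg : LocallyLipschitz g) :
    LocallyLipschitz (fun x => f x + g x) := by
  intro x
  obtain ⟨K, t, ht, hK⟩ := hf x
  obtain ⟨L, s, hs, hL⟩ := hg x
  refine ⟨K + L, t ∩ s, Filter.inter_mem ht hs, ?_⟩
  rw [lipschitzOnWith_iff_dist_le_mul] at hK hL ⊢
  intro a ha b hb
  calc dist (f a + g a) (f b + g b) ≤ dist (f a) (f b) + dist (g a) (g b) := dist_add_add_le _ _ _ _
    _ ≤ K * dist a b + L * dist a b := add_le_add (hK a ha.1 b hb.1) (hL a ha.2 b hb.2)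
    _ = ((K + L : NNReal) : ℝ) * dist a b := by push_cast; ring

lemma locallyLipschitz_neg {f : V → ℝ} (hf : LocallyLipschitz f) :
    LocallyLipschitz (fun x => -f x) := by
  intro x
  obtain ⟨K, t, ht, hK⟩ := hf x
  refine ⟨K, t, ht, ?_⟩
  rw [lipschitzOnWith_iff_dist_le_mul] at hK ⊢
  intro a ha b hb
  rw [dist_neg_neg]
  exact hK a ha b hb

/-- Uniform bound on difference quotients near a point, from local Lipschitzness. -/
lemma eventually_abs_DQ_le (f : V → ℝ) (hf : LocallyLipschitz f) (u : V) :
    ∃ K : ℝ, 0 ≤ K ∧ ∀ v : V, ∀ᶠ p in PF u, |DQ f v p| ≤ K * ‖v‖ := by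
  obtain ⟨K, t, ht, hK⟩ := hf u
  obtain ⟨ε, hε, hball⟩ := Metric.mem_nhds_iff.1 ht
  refine ⟨K, K.coe_nonneg, fun v => ?_⟩
  have h1' : ∀ᶠ x in nhds u, x ∈ Metric.ball u (ε / 2) :=
    Metric.ball_mem_nhds u (show (0:ℝ) < ε/2 by linarith)
  have h1 : ∀ᶠ p : V × ℝ in PF u, p.1 ∈ Metric.ball u (ε / 2) := h1'.prod_inl _
  have h2 : ∀ᶠ p : V × ℝ in PF u, p.2 ∈ Ioo (0 : ℝ) (ε / (2 * (‖v‖ + 1))) := by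
    refine Eventually.prod_inr ?_ _
    exact Ioo_mem_nhdsGT_of_mem ⟨le_refl _, by positivity⟩
  filter_upwards [h1, h2] with p hp1 hp2
  obtain ⟨x, s⟩ := p
  simp only at hp1 hp2 ⊢
  have hs0 : 0 < s := hp2.1
  have hsv : s * ‖v‖ < ε / 2 := by
    calc s * ‖v‖ ≤ s * (‖v‖ + 1) := by nlinarith [norm_nonneg v]
      _ < ε / (2 * (‖v‖ + 1)) * (‖v‖ + 1) := by
          have : (0:ℝ) < ‖v‖ + 1 := by positivity
          exact mul_lt_mul_of_pos_right hp2.2 this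
      _ = ε / 2 := by field_simp
  have hx : x ∈ t := hball (Metric.ball_subset_ball (by linarith) hp1)
  have hxs : x + s • v ∈ t := by
    apply hball
    have : ‖x + s • v - u‖ ≤ ‖x - u‖ + s * ‖v‖ := by
      calc ‖x + s • v - u‖ = ‖(x - u) + s • v‖ := by rw [add_sub_right_comm]
        _ ≤ ‖x - u‖ + ‖s • v‖ := norm_add_le _ _
        _ = ‖x - u‖ + s * ‖v‖ := by rw [norm_smul, Real.norm_eq_abs, abs_of_pos hs0]
    have hxu : ‖x - u‖ < ε / 2 := by simpa [Metric.mem_ball, dist_eq_norm] using hp1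
    have : ‖x + s • v - u‖ < ε := by linarith
    simpa [Metric.mem_ball, dist_eq_norm] using this
  have hd := (lipschitzOnWith_iff_dist_le_mul.1 hK) _ hxs _ hx
  rw [Real.dist_eq, dist_eq_norm] at hd
  have : ‖x + s • v - x‖ = s * ‖v‖ := by
    simp [norm_smul, Real.norm_eq_abs, abs_of_pos hs0]
  rw [this] at hd
  rw [DQ, abs_div, abs_of_pos hs0, div_le_iff₀ hs0]
  calc |f (x + s • v) - f x| ≤ K * (s * ‖v‖) := hd
    _ = K * ‖v‖ * s := by ring


section Bounds

variable {f : V → ℝ} {u v : V}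

lemma isBoundedUnder_DQ (hf : LocallyLipschitz f) (u v : V) :
    IsBoundedUnder (· ≤ ·) (PF u) (DQ f v) := by
  obtain ⟨K, _, hK⟩ := eventually_abs_DQ_le f hf u
  exact ⟨K * ‖v‖, (hK v).mono fun p h => (abs_le.1 h).2⟩

lemma isBoundedUnder_ge_DQ (hf : LocallyLipschitz f) (u v : V) :
    IsBoundedUnder (· ≥ ·) (PF u) (DQ f v) := by
  obtain ⟨K, _, hK⟩ := eventually_abs_DQ_le f hf u
  exact ⟨-(K * ‖v‖), (hK v).mono fun p h => (abs_le.1 h).1⟩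

/-- Pullback estimate: the limsup of difference quotients along any filter mapping into `PF u`
is at most the Clarke derivative. -/
lemma limsup_DQ_comp_le (hf : LocallyLipschitz f) (u v : V)
    {ι : Type*} {l : Filter ι} [l.NeBot] {m : ι → V × ℝ} (hm : Tendsto m l (PF u)) :
    limsup (fun i => DQ f v (m i)) l ≤ clarkeDeriv f u v := by
  have hb : IsBoundedUnder (· ≤ ·) (PF u) (DQ f v) := isBoundedUnder_DQ hf u v
  have hglb : IsBoundedUnder (· ≥ ·) l (fun i => DQ f v (m i)) := by
    obtain ⟨c, hc⟩ := isBoundedUnder_ge_DQ hf u v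
    exact ⟨c, hm.eventually hc⟩
  have hcb : IsCoboundedUnder (· ≤ ·) l (fun i => DQ f v (m i)) :=
    hglb.isCoboundedUnder_le
  refine le_of_forall_gt_imp_ge_of_dense fun r hr => ?_
  exact limsup_le_of_le hcb
    ((hm.eventually (eventually_lt_of_limsup_lt hr hb)).mono fun i h => h.le)

lemma abs_clarkeDeriv_le (hf : LocallyLipschitz f) (u : V) :
    ∃ K : ℝ, 0 ≤ K ∧ ∀ v : V, |clarkeDeriv f u v| ≤ K * ‖v‖ := by
  obtain ⟨K, hK0, hK⟩ := eventually_abs_DQ_le f hf u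
  refine ⟨K, hK0, fun v => abs_le.2 ⟨?_, ?_⟩⟩
  · refine le_limsup_of_frequently_le ?_ (isBoundedUnder_DQ hf u v)
    exact ((hK v).mono fun p h => (abs_le.1 h).1).frequently
  · refine limsup_le_of_le ((isBoundedUnder_ge_DQ hf u v).isCoboundedUnder_le) ?_
    exact (hK v).mono fun p h => (abs_le.1 h).2

lemma clarkeDeriv_zero_dir (f : V → ℝ) (u : V) : clarkeDeriv f u 0 = 0 := by
  rw [clarkeDeriv_def]
  have : DQ f 0 = fun _ : V × ℝ => (0 : ℝ) := by
    funext p; simp [DQ]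
  rw [this, limsup_const]

/-- The shift map used for subadditivity. -/
lemma tendsto_shift (u w : V) :
    Tendsto (fun p : V × ℝ => (p.1 + p.2 • w, p.2)) (PF u) (PF u) := by
  unfold PF
  refine Tendsto.prodMk ?_ tendsto_snd
  have h1 : Tendsto (fun p : V × ℝ => p.1 + p.2 • w) (nhds u ×ˢ nhds (0 : ℝ))
      (nhds (u + (0 : ℝ) • w)) := by
    rw [← nhds_prod_eq]
    exact (Continuous.tendsto (by continuity) (u, 0))
  have h2 := h1.mono_left
    (prod_mono (le_refl (nhds u)) (nhdsWithin_le_nhds (s := Ioi (0:ℝ))))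
  simpa using h2

lemma tendsto_scale (u : V) {c : ℝ} (hc : 0 < c) :
    Tendsto (fun p : V × ℝ => (p.1, c * p.2)) (PF u) (PF u) := by
  unfold PF
  refine Tendsto.prodMk tendsto_fst ?_
  rw [tendsto_nhdsWithin_iff]
  constructor
  · have : Tendsto (fun t : ℝ => c * t) (nhds 0) (nhds (c * 0)) :=
      (continuous_const.mul continuous_id).tendsto 0
    rw [mul_zero] at this
    exact this.comp (tendsto_snd.mono_left (prod_mono le_rfl nhdsWithin_le_nhds))
  · have : ∀ᶠ t : ℝ in nhdsWithin 0 (Ioi 0), t ∈ Ioi (0:ℝ) := self_mem_nhdsWithin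
    exact (this.prod_inr _).mono fun p hp => mul_pos hc hp

lemma clarkeDeriv_subadd (hf : LocallyLipschitz f) (u v w : V) :
    clarkeDeriv f u (v + w) ≤ clarkeDeriv f u v + clarkeDeriv f u w := by
  set m : V × ℝ → V × ℝ := fun p => (p.1 + p.2 • w, p.2) with hm
  have key : DQ f (v + w) = fun p => DQ f v (m p) + DQ f w p := by
    funext p
    simp only [DQ, hm, smul_add]
    rw [← add_div]
    have h : p.1 + (p.2 • v + p.2 • w) = p.1 + p.2 • w + p.2 • v := by module
    rw [h]
    ring
  rw [clarkeDeriv_def, key]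
  have h1 : IsBoundedUnder (· ≥ ·) (PF u) (fun p => DQ f v (m p)) := by
    obtain ⟨c, hc⟩ := isBoundedUnder_ge_DQ hf u v
    exact ⟨c, (tendsto_shift u w).eventually hc⟩
  have h2 : IsBoundedUnder (· ≤ ·) (PF u) (fun p => DQ f v (m p)) := by
    obtain ⟨c, hc⟩ := isBoundedUnder_DQ hf u v
    exact ⟨c, (tendsto_shift u w).eventually hc⟩
  have h3 : IsCoboundedUnder (· ≤ ·) (PF u) (DQ f w) :=
    (isBoundedUnder_ge_DQ hf u w).isCoboundedUnder_le
  have h4 : IsBoundedUnder (· ≤ ·) (PF u) (DQ f w) := isBoundedUnder_DQ hf u w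
  calc limsup (fun p => DQ f v (m p) + DQ f w p) (PF u)
      ≤ limsup (fun p => DQ f v (m p)) (PF u) + limsup (DQ f w) (PF u) :=
        limsup_add_le h1 h2 h3 h4
    _ ≤ clarkeDeriv f u v + clarkeDeriv f u w := by
        gcongr
        · exact limsup_DQ_comp_le hf u v (tendsto_shift u w)
        · exact le_of_eq (clarkeDeriv_def f u w).symm

lemma clarkeDeriv_neg_le (hf : LocallyLipschitz f) (u v : V) :
    clarkeDeriv (fun x => -f x) u v ≤ clarkeDeriv f u (-v) := by
  set m : V × ℝ → V × ℝ := fun p => (p.1 + p.2 • v, p.2) with hm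
  have key : DQ (fun x => -f x) v = fun p => DQ f (-v) (m p) := by
    funext p
    simp only [DQ, hm, smul_neg]
    rw [add_neg_cancel_right]
    ring
  rw [clarkeDeriv_def, key]
  exact limsup_DQ_comp_le hf u (-v) (tendsto_shift u v)

lemma clarkeDeriv_smul_le (hf : LocallyLipschitz f) (u v : V) {c : ℝ} (hc : 0 < c) :
    clarkeDeriv f u (c • v) ≤ c * clarkeDeriv f u v := by
  set m : V × ℝ → V × ℝ := fun p => (p.1, c * p.2) with hm
  have key : DQ f (c • v) = fun p => c * DQ f v (m p) := by
    funext p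
    simp only [DQ, hm]
    rw [smul_smul, mul_comm c p.2, ← smul_smul]
    rcases eq_or_ne p.2 0 with h | h
    · simp [h]
    · rw [smul_smul, mul_comm p.2 c]
      field_simp
  rw [clarkeDeriv_def, key]
  have hb : IsBoundedUnder (· ≤ ·) (PF u) (fun p => DQ f v (m p)) := by
    obtain ⟨d, hd⟩ := isBoundedUnder_DQ hf u v
    exact ⟨d, (tendsto_scale u hc).eventually hd⟩
  have hcb : IsCoboundedUnder (· ≤ ·) (PF u) (fun p => DQ f v (m p)) := by
    obtain ⟨d, hd⟩ := isBoundedUnder_ge_DQ hf u v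
    exact IsBoundedUnder.isCoboundedUnder_le ⟨d, (tendsto_scale u hc).eventually hd⟩
  have hmono : Monotone fun x : ℝ => c * x := fun a b h => mul_le_mul_of_nonneg_left h hc.le
  have heq := hmono.map_limsup_of_continuousAt (F := PF u) (fun p => DQ f v (m p))
    ((continuous_const.mul continuous_id).continuousAt) hb hcb
  have heq' : limsup (fun p => c * DQ f v (m p)) (PF u)
      = c * limsup (fun p => DQ f v (m p)) (PF u) := by
    rw [heq]; rfl
  rw [heq']
  exact mul_le_mul_of_nonneg_left (limsup_DQ_comp_le hf u v (tendsto_scale u hc)) hc.le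

lemma clarkeDeriv_smul (hf : LocallyLipschitz f) (u v : V) {c : ℝ} (hc : 0 < c) :
    clarkeDeriv f u (c • v) = c * clarkeDeriv f u v := by
  refine le_antisymm (clarkeDeriv_smul_le hf u v hc) ?_
  have h2 := clarkeDeriv_smul_le hf u (c • v) (inv_pos.2 hc)
  rw [smul_smul, inv_mul_cancel₀ hc.ne', one_smul] at h2
  calc c * clarkeDeriv f u v ≤ c * (c⁻¹ * clarkeDeriv f u (c • v)) := by nlinarith
    _ = clarkeDeriv f u (c • v) := by field_simp

end Bounds


section Quad

variable {f : V → ℝ} {u v : V}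

/-- Sum rule with a quadratic perturbation. -/
lemma clarkeDeriv_add_quad_le (hf : LocallyLipschitz f) (β : ℝ) (u v : V) :
    clarkeDeriv (fun x => f x + β * ‖x‖ ^ 2) u v ≤ clarkeDeriv f u v + 2 * β * ⟪u, v⟫ := by
  set Q : V × ℝ → ℝ := fun p => β * (2 * ⟪p.1, v⟫ + p.2 * ‖v‖ ^ 2) with hQ
  have key : ∀ᶠ p in PF u, DQ (fun x => f x + β * ‖x‖ ^ 2) v p = DQ f v p + Q p := by
    have hpos : ∀ᶠ p : V × ℝ in PF u, p.2 ∈ Ioi (0:ℝ) :=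
      Eventually.prod_inr self_mem_nhdsWithin _
    filter_upwards [hpos] with p hp
    have hp0 : p.2 ≠ 0 := ne_of_gt hp
    simp only [DQ, hQ]
    rw [div_add' _ _ _ hp0]
    congr 1
    have hn : ‖p.1 + p.2 • v‖ ^ 2 = ‖p.1‖ ^ 2 + 2 * (p.2 * ⟪p.1, v⟫) + p.2 ^ 2 * ‖v‖ ^ 2 := by
      rw [norm_add_sq_real, real_inner_smul_right, norm_smul, Real.norm_eq_abs,
        mul_pow, sq_abs]
    rw [hn]
    ring
  have hQt : Tendsto Q (PF u) (nhds (2 * β * ⟪u, v⟫)) := by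
    have hc : Continuous fun p : V × ℝ => β * (2 * ⟪p.1, v⟫ + p.2 * ‖v‖ ^ 2) := by
      apply continuous_const.mul
      exact ((continuous_const.mul ((continuous_inner (𝕜 := ℝ)).comp
        (continuous_fst.prodMk continuous_const))).add
        (continuous_snd.mul continuous_const))
    have : Tendsto Q (nhds u ×ˢ nhds (0:ℝ)) (nhds (β * (2 * ⟪u, v⟫ + 0 * ‖v‖ ^ 2))) := by
      rw [← nhds_prod_eq]
      exact hc.tendsto (u, 0)
    have h2 := this.mono_left
      (prod_mono (le_refl (nhds u)) (nhdsWithin_le_nhds (s := Ioi (0:ℝ))))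
    convert h2 using 2
    · rfl
    · ring
  rw [clarkeDeriv_def, limsup_congr key]
  have h1 : IsBoundedUnder (· ≥ ·) (PF u) (DQ f v) := isBoundedUnder_ge_DQ hf u v
  have h2 : IsBoundedUnder (· ≤ ·) (PF u) (DQ f v) := isBoundedUnder_DQ hf u v
  have h3 : IsCoboundedUnder (· ≤ ·) (PF u) Q := hQt.isBoundedUnder_ge.isCoboundedUnder_le
  have h4 : IsBoundedUnder (· ≤ ·) (PF u) Q := hQt.isBoundedUnder_le
  calc limsup (fun p => DQ f v p + Q p) (PF u)
      ≤ limsup (DQ f v) (PF u) + limsup Q (PF u) := limsup_add_le h1 h2 h3 h4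
    _ = clarkeDeriv f u v + 2 * β * ⟪u, v⟫ := by rw [hQt.limsup_eq, clarkeDeriv_def]

end Quad

section Convex

variable {f : V → ℝ}

/-- For a locally Lipschitz convex function, the Clarke derivative is dominated by
differences. -/
lemma clarkeDeriv_le_sub (hf : LocallyLipschitz f) (hc : ConvexOn ℝ Set.univ f) (u w : V) :
    clarkeDeriv f u w ≤ f (u + w) - f u := by
  have hcont : Continuous f := hf.continuous
  have hev : ∀ᶠ p in PF u, DQ f w p ≤ f (p.1 + w) - f p.1 := by
    have hio : ∀ᶠ p : V × ℝ in PF u, p.2 ∈ Ioo (0:ℝ) 1 :=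
      Eventually.prod_inr (Ioo_mem_nhdsGT_of_mem ⟨le_refl _, one_pos⟩) _
    filter_upwards [hio] with p hp
    obtain ⟨x, t⟩ := p
    simp only at hp ⊢
    have ht0 : 0 < t := hp.1
    have ht1 : t < 1 := hp.2
    have hcvx := hc.2 (Set.mem_univ x) (Set.mem_univ (x + w)) (by linarith : (0:ℝ) ≤ 1 - t)
      ht0.le (by ring)
    have hxt : (1 - t) • x + t • (x + w) = x + t • w := by module
    rw [hxt] at hcvx
    rw [DQ]
    rw [div_le_iff₀ ht0]
    have : f (x + t • w) ≤ (1 - t) * f x + t * f (x + w) := by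
      simpa [smul_eq_mul] using hcvx
    nlinarith
  have hG : Tendsto (fun p : V × ℝ => f (p.1 + w) - f p.1) (PF u)
      (nhds (f (u + w) - f u)) := by
    have : Tendsto (fun x : V => f (x + w) - f x) (nhds u) (nhds (f (u + w) - f u)) :=
      ((hcont.comp (continuous_id.add continuous_const)).sub hcont).tendsto u
    exact this.comp tendsto_fst
  have hcb : IsCoboundedUnder (· ≤ ·) (PF u) (DQ f w) :=
    (isBoundedUnder_ge_DQ hf u w).isCoboundedUnder_le
  refine le_of_forall_gt_imp_ge_of_dense fun r hr => ?_
  have hevr : ∀ᶠ p in PF u, f (p.1 + w) - f p.1 < r := hG.eventually (eventually_lt_nhds hr)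
  exact limsup_le_of_le hcb ((hev.and hevr).mono fun p h => h.1.trans h.2.le)

/-- Convexity implies monotonicity of the Clarke subdifferential. -/
lemma monotone_of_convexOn (hf : LocallyLipschitz f) (hc : ConvexOn ℝ Set.univ f) :
    ∀ u v ξ η : V, ξ ∈ clarkeSubdiff f u → η ∈ clarkeSubdiff f v → 0 ≤ ⟪ξ - η, u - v⟫ := by
  intro u v ξ η hξ hη
  have h1 : ⟪ξ, v - u⟫ ≤ f v - f u := by
    have := (hξ (v - u)).trans (clarkeDeriv_le_sub hf hc u (v - u))
    simpa using this
  have h2 : ⟪η, u - v⟫ ≤ f u - f v := by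
    have := (hη (u - v)).trans (clarkeDeriv_le_sub hf hc v (u - v))
    simpa using this
  have h3 : ⟪ξ, u - v⟫ = -⟪ξ, v - u⟫ := by
    rw [← inner_neg_right]
    congr 1
    abel
  have h4 : ⟪ξ - η, u - v⟫ = ⟪ξ, u - v⟫ - ⟪η, u - v⟫ := inner_sub_left _ _ _
  rw [h4, h3]
  linarith

end Convex


section Support

variable [CompleteSpace V] {f : V → ℝ}

/-- Existence of subgradients attaining the Clarke derivative in a given direction. -/
lemma exists_support (hf : LocallyLipschitz f) (u w : V) (hw : w ≠ 0) :
    ∃ ξ ∈ clarkeSubdiff f u, ⟪ξ, w⟫ = clarkeDeriv f u w := by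
  set N : V → ℝ := clarkeDeriv f u with hN
  have N_hom : ∀ c : ℝ, 0 < c → ∀ x, N (c • x) = c * N x := fun c hc x =>
    clarkeDeriv_smul hf u x hc
  have N_add : ∀ x y, N (x + y) ≤ N x + N y := fun x y => clarkeDeriv_subadd hf u x y
  have N_zero : N 0 = 0 := clarkeDeriv_zero_dir f u
  have N_symm : ∀ x, -N x ≤ N (-x) := by
    intro x
    have := N_add x (-x)
    rw [add_neg_cancel, N_zero] at this
    linarith
  have H : ∀ c : ℝ, c • w = 0 → c • (N w) = 0 := fun c hc =>
    (smul_eq_zero.1 hc).elim (fun hc => by rw [hc, zero_smul]) fun hx' => absurd hx' hw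
  have hdom : ∀ x : (LinearPMap.mkSpanSingleton' (σ := RingHom.id ℝ) w (N w) H).domain,
      (LinearPMap.mkSpanSingleton' (σ := RingHom.id ℝ) w (N w) H) x ≤ N x := by
    rintro ⟨x, hx⟩
    obtain ⟨c, rfl⟩ := Submodule.mem_span_singleton.1 hx
    have happ : (LinearPMap.mkSpanSingleton' (σ := RingHom.id ℝ) w (N w) H) ⟨c • w, hx⟩ = c * N w := by
      simpa [smul_eq_mul] using LinearPMap.mkSpanSingleton'_apply (σ := RingHom.id ℝ) w (N w) H c hx
    rw [happ]
    rcases lt_trichotomy c 0 with hc | hc | hc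
    · have h1 : N (c • w) = (-c) * N (-w) := by
        have : c • w = (-c) • (-w) := by module
        rw [this, N_hom (-c) (by linarith) (-w)]
      rw [h1]
      have h2 : -N w ≤ N (-w) := N_symm w
      nlinarith
    · simp [hc, N_zero]
    · rw [N_hom c hc w]
  obtain ⟨ℓ, hext, hle⟩ := exists_extension_of_le_sublinear
    (LinearPMap.mkSpanSingleton' (σ := RingHom.id ℝ) w (N w) H) N N_hom N_add hdom
  obtain ⟨K, hK0, hKb⟩ := abs_clarkeDeriv_le hf u
  have hbound : ∀ x, ‖ℓ x‖ ≤ K * ‖x‖ := by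
    intro x
    rw [Real.norm_eq_abs, abs_le]
    constructor
    · have h1 : ℓ (-x) ≤ N (-x) := hle (-x)
      have h2 : |N (-x)| ≤ K * ‖-x‖ := hKb (-x)
      rw [norm_neg] at h2
      have h3 : ℓ (-x) = -ℓ x := map_neg ℓ x
      have := (abs_le.1 h2).2
      linarith
    · exact (hle x).trans ((abs_le.1 (hKb x)).2)
  set L : V →L[ℝ] ℝ := ℓ.mkContinuous K hbound with hL
  refine ⟨(InnerProductSpace.toDual ℝ V).symm L, fun v => ?_, ?_⟩
  · rw [InnerProductSpace.toDual_symm_apply]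
    exact hle v
  · rw [InnerProductSpace.toDual_symm_apply]
    have h1 : L w = (LinearPMap.mkSpanSingleton' (σ := RingHom.id ℝ) w (N w) H)
        ⟨w, Submodule.mem_span_singleton_self w⟩ :=
      hext ⟨w, Submodule.mem_span_singleton_self w⟩
    rw [h1]
    exact LinearPMap.mkSpanSingleton'_apply_self (σ := RingHom.id ℝ) w (N w) H _

end Support


section MVT

variable {f : V → ℝ}

/-- Mean value inequality from a bound on Clarke derivatives along a segment. -/
lemma mvt_upper (hf : LocallyLipschitz f) (u w : V) {a b C : ℝ} (hab : a ≤ b)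
    (hC : ∀ x ∈ Ico a b, clarkeDeriv f (u + x • w) w ≤ C) :
    f (u + b • w) - f (u + a • w) ≤ C * (b - a) := by
  have hφc : Continuous fun t : ℝ => f (u + t • w) :=
    hf.continuous.comp (by continuity)
  have key := image_le_of_liminf_slope_right_le_deriv_boundary
    (f := fun t : ℝ => f (u + t • w)) (a := a) (b := b) hφc.continuousOn
    (B := fun t => f (u + a • w) + C * (t - a)) (B' := fun _ => C)
    (by simp)
    (by fun_prop)
    (fun x _ => by
      simpa using ((((hasDerivAt_id x).sub_const a).const_mul C).const_add
        (f (u + a • w))).hasDerivWithinAt (s := Ici x))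
    ?_ (right_mem_Icc.2 hab)
  · have key' : f (u + b • w) ≤ f (u + a • w) + C * (b - a) := by simpa using key
    linarith
  · intro x hx r hr
    have h1 : clarkeDeriv f (u + x • w) w < r := lt_of_le_of_lt (hC x hx) hr
    have hb : IsBoundedUnder (· ≤ ·) (PF (u + x • w)) (DQ f w) := isBoundedUnder_DQ hf _ w
    have h2 : ∀ᶠ p in PF (u + x • w), DQ f w p < r := eventually_lt_of_limsup_lt h1 hb
    have hm : Tendsto (fun z : ℝ => ((u + x • w : V), z - x)) (nhdsWithin x (Ioi x))
        (PF (u + x • w)) := by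
      unfold PF
      refine Tendsto.prodMk tendsto_const_nhds ?_
      rw [tendsto_nhdsWithin_iff]
      constructor
      · have h3 : Tendsto (fun z : ℝ => z - x) (nhds x) (nhds (x - x)) :=
          (continuous_id.sub continuous_const).tendsto x
        rw [sub_self] at h3
        exact h3.mono_left nhdsWithin_le_nhds
      · have hself : ∀ᶠ z in nhdsWithin x (Ioi x), z ∈ Ioi x := self_mem_nhdsWithin
        exact hself.mono fun z hz => (sub_pos.2 hz : (0:ℝ) < z - x)
    refine ((hm.eventually h2).mono ?_).frequently
    intro z hz
    have hpt : (u + x • w) + (z - x) • w = u + z • w := by module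
    have hzz : slope (fun t : ℝ => f (u + t • w)) x z
        = DQ f w ((u + x • w : V), z - x) := by
      simp only [slope_def_field, DQ, hpt]
    rw [hzz]
    exact hz

lemma neg_clarkeDeriv_le (hf : LocallyLipschitz f) (x w : V) :
    -clarkeDeriv f x w ≤ clarkeDeriv f x (-w) := by
  have h := clarkeDeriv_subadd hf x w (-w)
  rw [add_neg_cancel, clarkeDeriv_zero_dir] at h
  linarith

/-- Monotonicity of the Clarke subdifferential implies convexity. -/
lemma convexOn_of_monotone [CompleteSpace V] (hf : LocallyLipschitz f)
    (hm : ∀ u v ξ η : V, ξ ∈ clarkeSubdiff f u → η ∈ clarkeSubdiff f v → 0 ≤ ⟪ξ - η, u - v⟫) :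
    ConvexOn ℝ Set.univ f := by
  have hneg : LocallyLipschitz fun x => -f x := locallyLipschitz_neg hf
  have step4 : ∀ (u w : V), w ≠ 0 → ∀ s t : ℝ, s < t →
      clarkeDeriv f (u + s • w) w ≤ -clarkeDeriv f (u + t • w) (-w) := by
    intro u w hw s t hst
    obtain ⟨ξ, hξ, hξw⟩ := exists_support hf (u + s • w) w hw
    obtain ⟨η, hη, hηw⟩ := exists_support hf (u + t • w) (-w) (neg_ne_zero.2 hw)
    have h0 := hm _ _ _ _ hξ hη
    have hdiff : (u + s • w) - (u + t • w) = (s - t) • w := by module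
    rw [hdiff] at h0
    have h1 : ⟪ξ - η, (s - t) • w⟫ = (s - t) * (⟪ξ, w⟫ - ⟪η, w⟫) := by
      rw [real_inner_smul_right, inner_sub_left]
    rw [h1] at h0
    have hst' : s - t < 0 := by linarith
    have h2 : ⟪ξ, w⟫ ≤ ⟪η, w⟫ := by nlinarith
    have h3 : ⟪η, w⟫ = -⟪η, -w⟫ := by rw [inner_neg_right]; ring
    rw [hξw] at h2
    rw [h3, hηw] at h2
    exact h2
  have line : ∀ (u w : V), w ≠ 0 → ∀ x y z : ℝ, x < y → y < z →
      (f (u + y • w) - f (u + x • w)) / (y - x)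
        ≤ (f (u + z • w) - f (u + y • w)) / (z - y) := by
    intro u w hw x y z hxy hyz
    set K : ℝ := -clarkeDeriv f (u + y • w) (-w) with hK
    have up : f (u + y • w) - f (u + x • w) ≤ K * (y - x) :=
      mvt_upper hf u w hxy.le (fun s hs => step4 u w hw s y hs.2)
    have lo : K * (z - y) ≤ f (u + z • w) - f (u + y • w) := by
      have hC : ∀ s ∈ Ico y z, clarkeDeriv (fun x => -f x) (u + s • w) w
          ≤ clarkeDeriv f (u + y • w) (-w) := by
        intro s hs
        refine (clarkeDeriv_neg_le hf _ w).trans ?_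
        rcases eq_or_lt_of_le hs.1 with h | h
        · rw [← h]
        · have h4 := step4 u w hw y s h
          have h5 := neg_clarkeDeriv_le hf (u + y • w) w
          linarith
      have h6 := mvt_upper hneg u w hyz.le hC
      rw [hK]
      linarith
    rw [div_le_div_iff₀ (by linarith) (by linarith)]
    nlinarith
  constructor
  · exact convex_univ
  intro p hp q hq a b ha hb hab
  rcases eq_or_ne p q with rfl | hpq
  · have h1 : a • p + b • p = p := by rw [← add_smul, hab, one_smul]
    rw [h1]
    have h2 : a * f p + b * f p = f p := by rw [← add_mul, hab, one_mul]
    simp only [smul_eq_mul]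
    linarith
  · set w := q - p with hwdef
    have hw : w ≠ 0 := sub_ne_zero.2 (Ne.symm hpq)
    have hline : ConvexOn ℝ Set.univ (fun t : ℝ => f (p + t • w)) :=
      convexOn_of_slope_mono_adjacent convex_univ
        (fun {x y z} _ _ hxy hyz => line p w hw x y z hxy hyz)
    have h0 := hline.2 (Set.mem_univ (0:ℝ)) (Set.mem_univ (1:ℝ)) ha hb hab
    simp only [smul_eq_mul, mul_zero, mul_one, zero_add] at h0
    have h1 : p + b • w = a • p + b • q := by
      have haeq : a = 1 - b := by linarith
      rw [hwdef, haeq]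
      module
    have h2 : p + (0:ℝ) • w = p := by simp
    have h3 : p + (1:ℝ) • w = q := by rw [hwdef]; module
    rw [h1, h2, h3] at h0
    simpa [smul_eq_mul] using h0

end MVT

end ClarkeProof

open ClarkeProof

theorem strongConvex_iff_strongMonotone_clarkeSubdiff
    {V : Type*} [NormedAddCommGroup V] [InnerProductSpace ℝ V] [CompleteSpace V]
    (g : V → ℝ) (hg : LocallyLipschitz g) (α : ℝ) (hα : 0 < α) :
    ConvexOn ℝ Set.univ (fun v : V => g v - α * ‖v‖ ^ 2) ↔
      (∀ u v ξ η : V, ξ ∈ clarkeSubdiff g u → η ∈ clarkeSubdiff g v →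
        ⟪ξ - η, u - v⟫ ≥ 2 * α * ‖u - v‖ ^ 2) := by
  have hquad : ∀ β : ℝ, LocallyLipschitz (fun x : V => β * ‖x‖ ^ 2) := fun β =>
    (contDiff_const.mul (contDiff_norm_sq (𝕜 := ℝ) (n := 1))).locallyLipschitz
  set f : V → ℝ := fun x => g x - α * ‖x‖ ^ 2 with hfdef
  have hf : LocallyLipschitz f := by
    have h := locallyLipschitz_add hg (hquad (-α))
    have : (fun x : V => g x + (-α) * ‖x‖ ^ 2) = f := by
      funext x; rw [hfdef]; ring
    rwa [this] at h
  have hcd : ∀ u v : V, clarkeDeriv g u v = clarkeDeriv f u v + 2 * α * ⟪u, v⟫ := by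
    intro u v
    have h1 := clarkeDeriv_add_quad_le hf α u v
    have hfg : (fun x : V => f x + α * ‖x‖ ^ 2) = g := by
      funext x; rw [hfdef]; ring
    rw [hfg] at h1
    have h2 := clarkeDeriv_add_quad_le hg (-α) u v
    have hgf : (fun x : V => g x + (-α) * ‖x‖ ^ 2) = f := by
      funext x; rw [hfdef]; ring
    rw [hgf] at h2
    have h2' : clarkeDeriv f u v ≤ clarkeDeriv g u v - 2 * α * ⟪u, v⟫ := by linarith
    linarith
  have hsub : ∀ (u ξ : V), ξ ∈ clarkeSubdiff g u ↔ (ξ - (2*α) • u) ∈ clarkeSubdiff f u := by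
    intro u ξ
    constructor
    · intro h v
      have h1 := h v
      rw [hcd u v] at h1
      rw [inner_sub_left, real_inner_smul_left]
      linarith
    · intro h v
      have h1 := h v
      rw [inner_sub_left, real_inner_smul_left] at h1
      rw [hcd u v]
      linarith
  have hexp : ∀ u v ξ η : V,
      ⟪(ξ - (2*α) • u) - (η - (2*α) • v), u - v⟫ = ⟪ξ - η, u - v⟫ - 2*α*‖u - v‖^2 := by
    intro u v ξ η
    have h : (ξ - (2*α) • u) - (η - (2*α) • v) = (ξ - η) - (2*α) • (u - v) := by module
    rw [h, inner_sub_left, real_inner_smul_left, real_inner_self_eq_norm_sq]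
  constructor
  · intro hcv u v ξ η hξ hη
    have h1 := monotone_of_convexOn hf hcv u v _ _ ((hsub u ξ).1 hξ) ((hsub v η).1 hη)
    rw [hexp u v ξ η] at h1
    linarith
  · intro hmono
    apply convexOn_of_monotone hf
    intro u v ξ' η' hξ' hη'
    have hξ : (ξ' + (2*α) • u) ∈ clarkeSubdiff g u := by
      rw [hsub u (ξ' + (2*α) • u), add_sub_cancel_right]
      exact hξ'
    have hη : (η' + (2*α) • v) ∈ clarkeSubdiff g v := by
      rw [hsub v (η' + (2*α) • v), add_sub_cancel_right]
      exact hη'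
    have h1 := hmono u v _ _ hξ hη
    have h2 := hexp u v (ξ' + (2*α) • u) (η' + (2*α) • v)
    rw [add_sub_cancel_right, add_sub_cancel_right] at h2
    rw [h2] at *
    linarith
end
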